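/- Let D, x be real numbers with 0 < D < x and let g : ℝ → ℝ be continuous on [x − D, x + D]. Then ∫₀^{2π} ∫₀^D g(√(u² + x² − 2·u·x·cos φ)) · u du dφ = ∫_{x−D}^{x+D} 2·arccos((u² + x² − D²)/(2·u·x)) · g(u) · u du. -/

import Mathlib

/-!
Both sides are the integral of `g` of the Euclidean distance to the origin over the disk of
radius `D` about `(x, 0)`. In polar coordinates about the disk's centre, with the angle measured from the
direction of the origin, the distance to the origin is `√(u² + x² - 2ux cos φ)` by the law of
cosines; this gives the left side. In polar coordinates about the origin, the circle of radius
`u` meets the disk in the arc `|θ| ≤ arccos ((u² + x² - D²) / (2ux))`, and it misses the disk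
unless `x - D < u ≤ x + D`; this gives the right side.
-/

open MeasureTheory Real Set

section PolarCoord

variable {E : Type*} [NormedAddCommGroup E] [NormedSpace ℝ E] {f : ℝ × ℝ → E}

lemma MeasureTheory.Integrable.integrableOn_polarCoord_target (hf : Integrable f) :
    IntegrableOn (fun p : ℝ × ℝ => p.1 • f (polarCoord.symm p)) polarCoord.target := by
  have h := (integrableOn_image_iff_integrableOn_abs_det_fderiv_smul volume
    polarCoord.open_target.measurableSet
    (fun p _ => (hasFDerivAt_polarCoord_symm p).hasFDerivWithinAt)
    polarCoord.symm.injOn f).1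
    (by rw [polarCoord.symm_image_target_eq_source]; exact hf.integrableOn)
  simp_rw [det_fderivPolarCoordSymm] at h
  refine h.congr_fun (fun p hp => ?_) polarCoord.open_target.measurableSet
  simp only [abs_of_pos (show 0 < p.1 from hp.1)]

lemma integral_eq_integral_Ioi_integral_Ioo_polar (hf : Integrable f) :
    ∫ p, f p = ∫ r in Ioi 0, ∫ θ in Ioo (-π) π, r • f (r * cos θ, r * sin θ) := by
  have h := hf.integrableOn_polarCoord_target
  rw [← integral_comp_polarCoord_symm, polarCoord_target, Measure.volume_eq_prod] at *
  simp only [polarCoord_symm_apply] at *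
  exact setIntegral_prod _ h

lemma integral_eq_integral_Ioo_integral_Ioi_polar (hf : Integrable f) :
    ∫ p, f p = ∫ θ in Ioo (-π) π, ∫ r in Ioi 0, r • f (r * cos θ, r * sin θ) := by
  have h := hf.integrableOn_polarCoord_target
  rw [← integral_comp_polarCoord_symm, polarCoord_target, Measure.volume_eq_prod] at *
  simp only [polarCoord_symm_apply] at *
  rw [← setIntegral_prod_swap]
  exact setIntegral_prod _ (h.swap)

end PolarCoord

lemma le_cos_iff_abs_le_arccos {c θ : ℝ} (hc₁ : -1 ≤ c) (hc₂ : c ≤ 1) (hθ : |θ| ≤ π) :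
    c ≤ cos θ ↔ |θ| ≤ arccos c := by
  have h := strictAntiOn_cos.le_iff_ge ⟨arccos_nonneg c, arccos_le_pi c⟩ ⟨abs_nonneg θ, hθ⟩
  rwa [cos_abs, cos_arccos hc₁ hc₂] at h

lemma volume_Ioo_inter_setOf_le_cos (c : ℝ) :
    volume (Ioo (-π) π ∩ {θ | c ≤ cos θ}) = ENNReal.ofReal (2 * arccos c) := by
  rcases le_or_gt c (-1) with hc | hc
  · have hset : Ioo (-π) π ∩ {θ | c ≤ cos θ} = Ioo (-π) π :=
      inter_eq_left.2 fun θ _ => hc.trans (neg_one_le_cos θ)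
    rw [hset, Real.volume_Ioo, arccos_eq_pi.2 hc]
    ring_nf
  rcases le_or_gt c 1 with hc' | hc'
  · have hset : Ioo (-π) π ∩ {θ | c ≤ cos θ} = Icc (-arccos c) (arccos c) := by
      ext θ
      simp only [mem_inter_iff, mem_Ioo, mem_ofPred_eq, mem_Icc, ← abs_le, ← abs_lt]
      constructor
      · exact fun h => (le_cos_iff_abs_le_arccos hc.le hc' h.1.le).1 h.2
      · intro h
        have hθ := h.trans_lt (arccos_lt_pi.2 hc)
        exact ⟨hθ, (le_cos_iff_abs_le_arccos hc.le hc' hθ.le).2 h⟩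
    rw [hset, Real.volume_Icc]
    ring_nf
  · have hset : Ioo (-π) π ∩ {θ | c ≤ cos θ} = ∅ :=
      eq_empty_of_forall_notMem fun θ h => (hc'.trans_le h.2).not_ge (cos_le_one θ)
    rw [hset, arccos_eq_zero.2 hc'.le]
    simp

def offsetDisk (x D : ℝ) : Set (ℝ × ℝ) := {z | (z.1 - x) ^ 2 + z.2 ^ 2 ≤ D ^ 2}

noncomputable def radialOnDisk (x D : ℝ) (g : ℝ → ℝ) : ℝ × ℝ → ℝ :=
  (offsetDisk x D).indicator fun z => g √(z.1 ^ 2 + z.2 ^ 2)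

section Disk

variable {x D : ℝ} {g : ℝ → ℝ}

lemma isCompact_offsetDisk (x D : ℝ) : IsCompact (offsetDisk x D) := by
  refine ((isCompact_Icc (a := x - |D|) (b := x + |D|)).prod
    (isCompact_Icc (a := -|D|) (b := |D|))).of_isClosed_subset
    (isClosed_le (by fun_prop) continuous_const) fun z hz => ?_
  have h₁ : |z.1 - x| ≤ |D| := sq_le_sq.1 (by nlinarith [sq_nonneg z.2, hz.out])
  have h₂ : |z.2| ≤ |D| := sq_le_sq.1 (by nlinarith [sq_nonneg (z.1 - x), hz.out])
  rw [abs_le] at h₁ h₂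
  exact ⟨⟨by linarith, by linarith⟩, h₂⟩

lemma sqrt_mem_Icc_of_mem_offsetDisk (hx : 0 ≤ x) (hD : 0 ≤ D) {z : ℝ × ℝ}
    (hz : z ∈ offsetDisk x D) : √(z.1 ^ 2 + z.2 ^ 2) ∈ Icc (x - D) (x + D) := by
  set s := √(z.1 ^ 2 + z.2 ^ 2)
  have hs : s ^ 2 = z.1 ^ 2 + z.2 ^ 2 := sq_sqrt (by positivity)
  have hz₁ : z.1 ≤ s := le_sqrt_of_sq_le (by nlinarith [sq_nonneg z.2])
  have h := abs_le_of_sq_le_sq' (a := s - x) (by nlinarith [hz.out]) hD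
  constructor <;> linarith [h.1, h.2]

lemma integrable_radialOnDisk (hx : 0 ≤ x) (hD : 0 ≤ D)
    (hg : ContinuousOn g (Icc (x - D) (x + D))) : Integrable (radialOnDisk x D g) := by
  refine IntegrableOn.integrable_indicator ?_ (isCompact_offsetDisk x D).isClosed.measurableSet
  refine ContinuousOn.integrableOn_compact (isCompact_offsetDisk x D) ?_
  exact hg.comp (by fun_prop) fun z hz => sqrt_mem_Icc_of_mem_offsetDisk hx hD hz

lemma sqrt_mul_cos_sq_add_mul_sin_sq {r : ℝ} (hr : 0 ≤ r) (θ : ℝ) :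
    √((r * cos θ) ^ 2 + (r * sin θ) ^ 2) = r := by
  rw [show (r * cos θ) ^ 2 + (r * sin θ) ^ 2 = r ^ 2 by
    linear_combination r ^ 2 * cos_sq_add_sin_sq θ, sqrt_sq hr]

lemma polar_mem_offsetDisk_iff {r : ℝ} (hr : 0 < r) (hx : 0 < x) (θ : ℝ) :
    (r * cos θ, r * sin θ) ∈ offsetDisk x D ↔ (r ^ 2 + x ^ 2 - D ^ 2) / (2 * r * x) ≤ cos θ := by
  have h : (r * cos θ - x) ^ 2 + (r * sin θ) ^ 2 = r ^ 2 + x ^ 2 - 2 * r * x * cos θ := by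
    linear_combination r ^ 2 * sin_sq_add_cos_sq θ
  rw [div_le_iff₀ (by positivity), offsetDisk, mem_ofPred_eq, h]
  constructor <;> intro <;> linarith

lemma integral_Ioo_radialOnDisk_polar {r : ℝ} (hr : 0 < r) (hx : 0 < x) :
    ∫ θ in Ioo (-π) π, r • radialOnDisk x D g (r * cos θ, r * sin θ)
      = 2 * arccos ((r ^ 2 + x ^ 2 - D ^ 2) / (2 * r * x)) * g r * r := by
  set c := (r ^ 2 + x ^ 2 - D ^ 2) / (2 * r * x)
  have h : (fun θ => r • radialOnDisk x D g (r * cos θ, r * sin θ))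
      = {θ | c ≤ cos θ}.indicator fun _ => r * g r := by
    ext θ
    simp only [radialOnDisk, indicator, polar_mem_offsetDisk_iff hr hx,
      sqrt_mul_cos_sq_add_mul_sin_sq hr.le, smul_eq_mul, mem_ofPred_eq]
    split_ifs <;> simp
  rw [h, setIntegral_indicator (measurableSet_le measurable_const continuous_cos.measurable),
    setIntegral_const, measureReal_def, volume_Ioo_inter_setOf_le_cos,
    ENNReal.toReal_ofReal (mul_nonneg zero_le_two (arccos_nonneg c)), smul_eq_mul]
  ring

lemma integral_radialOnDisk_eq_radial (hD : 0 ≤ D) (hDx : D < x)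
    (hg : ContinuousOn g (Icc (x - D) (x + D))) :
    ∫ z, radialOnDisk x D g z
      = ∫ u in (x - D)..(x + D), 2 * arccos ((u ^ 2 + x ^ 2 - D ^ 2) / (2 * u * x)) * g u * u := by
  have hx : 0 < x := hD.trans_lt hDx
  rw [integral_eq_integral_Ioi_integral_Ioo_polar (integrable_radialOnDisk hx.le hD hg),
    intervalIntegral.integral_of_le (by linarith)]
  calc _ = ∫ r in Ioi 0, 2 * arccos ((r ^ 2 + x ^ 2 - D ^ 2) / (2 * r * x)) * g r * r :=
        setIntegral_congr_fun measurableSet_Ioi fun r hr => integral_Ioo_radialOnDisk_polar hr hx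
    _ = _ := by
      refine setIntegral_eq_of_subset_of_forall_sdiff_eq_zero measurableSet_Ioi
        (Ioc_subset_Ioi_self.trans (Ioi_subset_Ioi (by linarith))) ?_
      rintro r ⟨hr : 0 < r, hr'⟩
      have hc : 1 ≤ (r ^ 2 + x ^ 2 - D ^ 2) / (2 * r * x) := by
        rw [le_div_iff₀ (by positivity)]
        simp only [mem_Ioc, not_and_or, not_lt, not_le] at hr'
        rcases hr' with h | h <;> nlinarith
      simp [arccos_eq_zero.2 hc]

lemma integral_Ioi_radialOnDisk_polar_sub (hD : 0 ≤ D) (θ : ℝ) :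
    ∫ r in Ioi 0, r • radialOnDisk x D g ((x, 0) - (r * cos θ, r * sin θ))
      = ∫ u in 0..D, g √(u ^ 2 + x ^ 2 - 2 * u * x * cos θ) * u := by
  have h : EqOn (fun r => r • radialOnDisk x D g ((x, 0) - (r * cos θ, r * sin θ)))
      ((Iic D).indicator fun u => g √(u ^ 2 + x ^ 2 - 2 * u * x * cos θ) * u) (Ioi 0) := by
    intro r hr
    have hdist : (x - r * cos θ - x) ^ 2 + (0 - r * sin θ) ^ 2 = r ^ 2 := by
      linear_combination r ^ 2 * sin_sq_add_cos_sq θ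
    have hnorm : (x - r * cos θ) ^ 2 + (0 - r * sin θ) ^ 2 = r ^ 2 + x ^ 2 - 2 * r * x * cos θ := by
      linear_combination r ^ 2 * sin_sq_add_cos_sq θ
    simp only [radialOnDisk, offsetDisk, indicator, Prod.mk_sub_mk, mem_ofPred_eq, hdist, hnorm,
      smul_eq_mul, mem_Iic, pow_le_pow_iff_left₀ hr.out.le hD two_ne_zero]
    split_ifs <;> ring
  rw [setIntegral_congr_fun measurableSet_Ioi h, setIntegral_indicator measurableSet_Iic,
    Ioi_inter_Iic, intervalIntegral.integral_of_le hD]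

lemma integral_radialOnDisk_eq_centered (hx : 0 ≤ x) (hD : 0 ≤ D)
    (hg : ContinuousOn g (Icc (x - D) (x + D))) :
    ∫ z, radialOnDisk x D g z
      = ∫ φ in 0..2 * π, ∫ u in 0..D, g √(u ^ 2 + x ^ 2 - 2 * u * x * cos φ) * u := by
  have hf := (integrable_radialOnDisk hx hD hg).comp_sub_left ((x, 0) : ℝ × ℝ)
  rw [← integral_sub_left_eq_self _ volume ((x, 0) : ℝ × ℝ),
    integral_eq_integral_Ioo_integral_Ioi_polar hf]
  simp_rw [integral_Ioi_radialOnDisk_polar_sub hD]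
  have hper : Function.Periodic (fun φ => ∫ u in 0..D, g √(u ^ 2 + x ^ 2 - 2 * u * x * cos φ) * u)
      (2 * π) := fun φ => by simp only [cos_add_two_pi]
  have := hper.intervalIntegral_add_eq (-π) 0
  rwa [show -π + 2 * π = π by ring, zero_add,
    intervalIntegral.integral_of_le (by linarith [pi_pos]), integral_Ioc_eq_integral_Ioo] at this

end Disk

theorem hole_integral_polar_to_radial
    (D x : ℝ) (hD : 0 < D) (hDx : D < x)
    (g : ℝ → ℝ) (hg : ContinuousOn g (Set.Icc (x - D) (x + D))) :
    ∫ φ in (0:ℝ)..(2 * π),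
        (∫ u in (0:ℝ)..D, g (Real.sqrt (u ^ 2 + x ^ 2 - 2 * u * x * Real.cos φ)) * u)
      = ∫ u in (x - D)..(x + D),
          2 * Real.arccos ((u ^ 2 + x ^ 2 - D ^ 2) / (2 * u * x)) * g u * u := by
  rw [← integral_radialOnDisk_eq_centered (hD.trans hDx).le hD.le hg,
    integral_radialOnDisk_eq_radial hD.le hDx hg]
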